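/- Let p^m ≡ 3 (mod 4), α a nonzero non-square in F_{p^m}, β ≠ 0, and let C = ⟨(x²+γx+γ²/2)^i (x²-γx+γ²/2)^j⟩ be an ideal of 𝓡 = R[x]/⟨x^{4p^s}-(α+βu)⟩ with 0 ≤ i, j ≤ 2p^s. Then the annihilator of C in 𝓡 is ⟨(x²+γx+γ²/2)^{2p^s-i} (x²-γx+γ²/2)^{2p^s-j}⟩. -/

import Mathlib

/-
Because `γ⁴ = -4α₀`, the quadratics `P = x² + γx + γ²/2` and `Q = x² - γx + γ²/2` multiply
to `x⁴ - α₀`, so by the Frobenius `x^{4p^s} - α = (PQ)^{p^s}` over `F_{p^m}`. In `𝓡` the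
defining relation `x^{4p^s} - α = βu` lets one eliminate `u = (x^{4p^s} - α)/β`; as `u² = 0`
this identifies `𝓡` with `F_{p^m}[x]/⟨(PQ)^{2p^s}⟩`. There the annihilator of `a = PⁱQʲ` is
`⟨b⟩` with `ab = (PQ)^{2p^s}`: `fa ∈ ⟨ab⟩` iff `b ∣ f`, cancelling `a` in the domain `F_{p^m}[x]`.
-/

open Polynomial

/-- The chain ring `R = F_{p^m}[u]/⟨u²⟩`. -/
abbrev Ru (K : Type) [Field K] : Type := K[X] ⧸ Ideal.span {(X : K[X]) ^ 2}

noncomputable instance instCommRingRu (K : Type) [Field K] : CommRing (Ru K) := Ideal.Quotient.commRing _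

/-- The element `u` of `R`. -/
noncomputable def uR (K : Type) [Field K] : Ru K :=
  Ideal.Quotient.mk _ (X : K[X])

/-- The natural inclusion of `F_{p^m}` into `R`. -/
noncomputable def tR (K : Type) [Field K] (a : K) : Ru K :=
  Ideal.Quotient.mk _ (C a : K[X])

/-- The ambient ring `R[x]/⟨xⁿ - λ⟩` of `λ`-constacyclic codes of length `n` over `R`. -/
abbrev RC (K : Type) [Field K] (lam : Ru K) (n : ℕ) : Type :=
  (Ru K)[X] ⧸ Ideal.span {(X : (Ru K)[X]) ^ n - C lam}

/-- The canonical projection `R[x] → R[x]/⟨xⁿ - λ⟩`. -/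
noncomputable def mkC (K : Type) [Field K] (lam : Ru K) (n : ℕ) :
    (Ru K)[X] →+* RC K lam n :=
  Ideal.Quotient.mk _

/-- The quadratic `x² + γx + γ²/2`, viewed over `R`. -/
noncomputable def qR (K : Type) [Field K] (g : K) : (Ru K)[X] :=
  X ^ 2 + C (tR K g) * X + C (tR K (g ^ 2 / 2))

open Ideal

theorem Ideal.forall_mem_span_singleton_mul_eq_zero_iff {R : Type*} [CommSemiring R] (x y : R) :
    (∀ c ∈ span {y}, x * c = 0) ↔ x * y = 0 :=
  Submodule.mem_annihilator.symm.trans (Submodule.mem_annihilator_span_singleton y x)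

theorem Ideal.Quotient.mul_mk_eq_zero_iff_mem_span {D : Type*} [CommRing D] [IsDomain D]
    {a b c : D} (ha : a ≠ 0) (hc : a * b = c) (x : D ⧸ span {c}) :
    x * mk _ a = 0 ↔ x ∈ span {mk (span {c}) b} := by
  obtain ⟨y, rfl⟩ := mk_surjective x
  have hle : span {c} ≤ span {b} := span_singleton_le_span_singleton.2 (hc ▸ dvd_mul_left b a)
  rw [← map_mul, eq_zero_iff_mem, ← Set.image_singleton, ← map_span,
    mem_quotient_iff_mem hle, mem_span_singleton, mem_span_singleton, ← hc, mul_comm y,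
    mul_dvd_mul_iff_left ha]

theorem RingEquiv.mem_span_singleton_iff {R S : Type*} [Semiring R] [Semiring S] (e : R ≃+* S)
    (x y : R) : e x ∈ span {e y} ↔ x ∈ span {y} := by
  rw [← Set.image_singleton, ← map_span, apply_mem_of_equiv_iff]

noncomputable def Ideal.Quotient.liftSpanSingleton {R S : Type*} [CommRing R] [Semiring S]
    {r : R} (f : R →+* S) (hf : f r = 0) : R ⧸ span {r} →+* S :=
  Quotient.lift _ f fun a ha => by
    obtain ⟨c, rfl⟩ := mem_span_singleton'.1 ha
    rw [map_mul, hf, mul_zero]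

@[simp]
theorem Ideal.Quotient.liftSpanSingleton_mk {R S : Type*} [CommRing R] [Semiring S]
    {r : R} (f : R →+* S) (hf : f r = 0) (a : R) : liftSpanSingleton f hf (mk _ a) = f a :=
  rfl

section ConstacyclicRing

variable {K : Type} [Field K]

variable (K) in
noncomputable def tRHom : K →+* Ru K := (Ideal.Quotient.mk _).comp C

@[simp]
theorem tRHom_apply (a : K) : tRHom K a = tR K a := rfl

theorem Ru.ringHom_ext {S : Type*} [Semiring S] {f g : Ru K →+* S}
    (hC : ∀ a, f (tR K a) = g (tR K a)) (hu : f (uR K) = g (uR K)) : f = g :=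
  Quotient.ringHom_ext (Polynomial.ringHom_ext hC hu)

theorem uR_sq : uR K ^ 2 = 0 :=
  Quotient.eq_zero_iff_mem.2 (mem_span_singleton_self _)

theorem RC.ringHom_ext {lam : Ru K} {n : ℕ} {S : Type*} [Semiring S] {f g : RC K lam n →+* S}
    (hC : ∀ a, f (mkC K lam n (C a)) = g (mkC K lam n (C a)))
    (hX : f (mkC K lam n X) = g (mkC K lam n X)) : f = g :=
  Quotient.ringHom_ext (Polynomial.ringHom_ext hC hX)

theorem mkC_X_pow_sub_C (lam : Ru K) (n : ℕ) : mkC K lam n (X ^ n - C lam) = 0 :=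
  Quotient.eq_zero_iff_mem.2 (mem_span_singleton_self _)

variable (α β : K) (n : ℕ)

noncomputable def RC.ofPoly : K[X] →+* RC K (tR K α + tR K β * uR K) n :=
  (mkC K _ n).comp (mapRingHom (tRHom K))

@[simp]
theorem RC.ofPoly_C (a : K) : RC.ofPoly α β n (C a) = mkC K _ n (C (tR K a)) := by
  simp [RC.ofPoly]

@[simp]
theorem RC.ofPoly_X : RC.ofPoly α β n X = mkC K _ n X := by
  simp [RC.ofPoly]

theorem RC.ofPoly_X_pow_sub_C :
    RC.ofPoly α β n (X ^ n - C α) = mkC K _ n (C (tR K β * uR K)) := by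
  rw [← sub_eq_zero, RC.ofPoly, RingHom.comp_apply, ← map_sub, ← mkC_X_pow_sub_C]
  simp only [map_sub, map_add, map_mul, coe_mapRingHom, Polynomial.map_pow, map_X, map_C,
    tRHom_apply]
  ring

theorem RC.ofPoly_X_pow_sub_C_sq : RC.ofPoly α β n ((X ^ n - C α) ^ 2) = 0 := by
  rw [map_pow, RC.ofPoly_X_pow_sub_C, ← map_pow, ← map_pow, mul_pow, uR_sq, mul_zero, C_0,
    map_zero]

noncomputable def RC.ofQuotSq :
    K[X] ⧸ span {(X ^ n - C α) ^ 2} →+* RC K (tR K α + tR K β * uR K) n :=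
  Quotient.liftSpanSingleton _ (RC.ofPoly_X_pow_sub_C_sq α β n)

@[simp]
theorem RC.ofQuotSq_mk (f : K[X]) :
    RC.ofQuotSq α β n (Ideal.Quotient.mk _ f) = RC.ofPoly α β n f :=
  rfl

noncomputable def Ru.toQuotSq : Ru K →+* K[X] ⧸ span {(X ^ n - C α) ^ 2} :=
  Quotient.liftSpanSingleton
    (eval₂RingHom ((Ideal.Quotient.mk _).comp C)
      (Ideal.Quotient.mk _ (C β⁻¹ * (X ^ n - C α))))
    (by
      rw [coe_eval₂RingHom, eval₂_X_pow, ← map_pow, mul_pow, Quotient.eq_zero_iff_mem]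
      exact mem_span_singleton.2 (dvd_mul_left _ _))

@[simp]
theorem Ru.toQuotSq_tR (a : K) : Ru.toQuotSq α β n (tR K a) = Ideal.Quotient.mk _ (C a) := by
  simp [Ru.toQuotSq, tR]

@[simp]
theorem Ru.toQuotSq_uR :
    Ru.toQuotSq α β n (uR K) = Ideal.Quotient.mk _ (C β⁻¹ * (X ^ n - C α)) := by
  simp [Ru.toQuotSq, uR]

variable {β}

noncomputable def RC.toQuotSq (hβ : β ≠ 0) :
    RC K (tR K α + tR K β * uR K) n →+* K[X] ⧸ span {(X ^ n - C α) ^ 2} :=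
  Quotient.liftSpanSingleton (eval₂RingHom (Ru.toQuotSq α β n) (Ideal.Quotient.mk _ X))
    (by
      rw [coe_eval₂RingHom, eval₂_sub, eval₂_X_pow, eval₂_C, map_add, map_mul,
        Ru.toQuotSq_tR, Ru.toQuotSq_tR, Ru.toQuotSq_uR, ← map_pow, ← map_mul, ← map_add,
        ← map_sub, ← mul_assoc, ← C_mul, mul_inv_cancel₀ hβ, C_1, one_mul, add_sub_cancel,
        sub_self, map_zero])

@[simp]
theorem RC.toQuotSq_mkC (hβ : β ≠ 0) (f : (Ru K)[X]) :
    RC.toQuotSq α n hβ (mkC K _ n f) = f.eval₂ (Ru.toQuotSq α β n) (Ideal.Quotient.mk _ X) :=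
  rfl

theorem RC.ofPoly_C_inv_mul (hβ : β ≠ 0) :
    RC.ofPoly α β n (C β⁻¹ * (X ^ n - C α)) = mkC K _ n (C (uR K)) := by
  have hinv : tR K β⁻¹ * tR K β = 1 := by
    rw [← tRHom_apply, ← tRHom_apply, ← map_mul, inv_mul_cancel₀ hβ, map_one]
  rw [map_mul, RC.ofPoly_X_pow_sub_C, RC.ofPoly_C, ← map_mul, ← C_mul, ← mul_assoc, hinv,
    one_mul]

noncomputable def RC.equivQuotSq (hβ : β ≠ 0) :
    K[X] ⧸ span {(X ^ n - C α) ^ 2} ≃+* RC K (tR K α + tR K β * uR K) n :=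
  RingEquiv.ofRingHom (RC.ofQuotSq α β n) (RC.toQuotSq α n hβ)
    (RC.ringHom_ext
      (fun r => by
        suffices (RC.ofQuotSq α β n).comp (Ru.toQuotSq α β n) = (mkC K _ n).comp C by
          simpa using RingHom.congr_fun this r
        exact Ru.ringHom_ext (fun a => by simp) (by
          simp only [RingHom.comp_apply, Ru.toQuotSq_uR, RC.ofQuotSq_mk,
            RC.ofPoly_C_inv_mul α n hβ]))
      (by simp))
    (Quotient.ringHom_ext (Polynomial.ringHom_ext (fun a => by simp) (by simp)))

@[simp]
theorem RC.equivQuotSq_mk (hβ : β ≠ 0) (f : K[X]) :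
    RC.equivQuotSq α n hβ (Ideal.Quotient.mk _ f) = mkC K _ n (f.map (tRHom K)) :=
  rfl

end ConstacyclicRing

section Quadratics

variable {K : Type} [Field K]

noncomputable def qK (g : K) : K[X] := X ^ 2 + C g * X + C (g ^ 2 / 2)

theorem map_qK (g : K) : (qK g).map (tRHom K) = qR K g := by
  simp [qK, qR]

theorem qK_ne_zero (g : K) : qK g ≠ 0 := by
  intro h
  simpa [qK, coeff_C] using congrArg (coeff · 2) h

theorem qK_mul_qK_neg (h2 : (2 : K) ≠ 0) {γ α₀ : K} (hγ : γ ^ 4 = -4 * α₀) :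
    qK γ * qK (-γ) = X ^ 4 - C α₀ := by
  have h1 : γ ^ 2 / 2 + γ ^ 2 / 2 - γ * γ = 0 := by field_simp; ring
  have h0 : γ ^ 2 / 2 * (γ ^ 2 / 2) = -α₀ := by field_simp; linear_combination hγ
  calc qK γ * qK (-γ)
      = X ^ 4 + C (γ ^ 2 / 2 + γ ^ 2 / 2 - γ * γ) * X ^ 2 + C (γ ^ 2 / 2 * (γ ^ 2 / 2)) := by
        simp only [qK, map_add, map_sub, map_mul, map_neg, neg_sq]; ring
    _ = X ^ 4 - C α₀ := by rw [h1, h0, C_0, C_neg]; ring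

end Quadratics

theorem X_pow_sub_C_pow_char_pow {K : Type*} [CommRing K] (p : ℕ) [Fact p.Prime] [CharP K p]
    (k s : ℕ) (a : K) : (X ^ k - C a) ^ p ^ s = X ^ (k * p ^ s) - C (a ^ p ^ s) := by
  rw [sub_pow_char_pow, ← pow_mul, ← C_pow]

theorem stmt19_general (p s m : ℕ) (hp : p.Prime) (hodd : Odd p)
    (K : Type) [Field K] [Fintype K] (hK : Fintype.card K = p ^ m)
    (α β : K) (hβ : β ≠ 0)
    (α₀ : K) (hα₀ : α₀ ^ p ^ s = α) (γ : K) (hγ : γ ^ 4 = -4 * α₀) :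
    ∀ i j : ℕ, i ≤ 2 * p ^ s → j ≤ 2 * p ^ s →
      ∀ f : RC K (tR K α + tR K β * uR K) (4 * p ^ s),
        (∀ c ∈ Ideal.span {mkC K (tR K α + tR K β * uR K) (4 * p ^ s)
            (qR K γ ^ i * qR K (-γ) ^ j)}, f * c = 0) ↔
          f ∈ Ideal.span {mkC K (tR K α + tR K β * uR K) (4 * p ^ s)
            (qR K γ ^ (2 * p ^ s - i) * qR K (-γ) ^ (2 * p ^ s - j))} := by
  have : Fact p.Prime := ⟨hp⟩
  have : CharP K p := charP_of_card_eq_prime_pow hK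
  have h2 : (2 : K) ≠ 0 := Ring.two_ne_zero <| by
    rw [ringChar.eq K p]
    rintro rfl
    exact Nat.not_odd_iff_even.2 even_two hodd
  intro i j hi hj f
  let e := RC.equivQuotSq α (4 * p ^ s) hβ
  have he (a b : ℕ) : mkC K _ _ (qR K γ ^ a * qR K (-γ) ^ b) =
      e (Ideal.Quotient.mk _ (qK γ ^ a * qK (-γ) ^ b)) := by
    rw [RC.equivQuotSq_mk, Polynomial.map_mul, Polynomial.map_pow, Polynomial.map_pow, map_qK,
      map_qK]
  have hw : (qK γ ^ i * qK (-γ) ^ j) * (qK γ ^ (2 * p ^ s - i) * qK (-γ) ^ (2 * p ^ s - j)) =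
      (X ^ (4 * p ^ s) - C α) ^ 2 := by
    rw [mul_mul_mul_comm, ← pow_add, ← pow_add, Nat.add_sub_cancel' hi, Nat.add_sub_cancel' hj,
      ← mul_pow, qK_mul_qK_neg h2 hγ, mul_comm 2, pow_mul, X_pow_sub_C_pow_char_pow p, hα₀]
  refine (forall_mem_span_singleton_mul_eq_zero_iff f _).trans ?_
  obtain ⟨g, rfl⟩ := e.surjective f
  rw [he, he, ← map_mul, map_eq_zero_iff e e.injective, e.mem_span_singleton_iff]
  exact Quotient.mul_mk_eq_zero_iff_mem_span
    (mul_ne_zero (pow_ne_zero _ (qK_ne_zero _)) (pow_ne_zero _ (qK_ne_zero _))) hw g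

theorem stmt19 (p s m : ℕ) (hp : p.Prime) (hodd : Odd p) (hs : 0 < s) (hm : 0 < m)
    (K : Type) [Field K] [Fintype K] (hK : Fintype.card K = p ^ m)
    (h3 : p ^ m % 4 = 3) (α β : K) (hα : α ≠ 0) (hns : ¬ IsSquare α) (hβ : β ≠ 0)
    (α₀ : K) (hα₀ : α₀ ^ p ^ s = α) (γ : K) (hγ : γ ^ 4 = -4 * α₀) :
    ∀ i j : ℕ, i ≤ 2 * p ^ s → j ≤ 2 * p ^ s →
      ∀ f : RC K (tR K α + tR K β * uR K) (4 * p ^ s),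
        (∀ c ∈ Ideal.span {mkC K (tR K α + tR K β * uR K) (4 * p ^ s)
            (qR K γ ^ i * qR K (-γ) ^ j)}, f * c = 0) ↔
          f ∈ Ideal.span {mkC K (tR K α + tR K β * uR K) (4 * p ^ s)
            (qR K γ ^ (2 * p ^ s - i) * qR K (-γ) ^ (2 * p ^ s - j))} :=
  stmt19_general p s m hp hodd K hK α β hβ α₀ hα₀ γ hγ
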